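/- There exist a co-c.e. (Π⁰₁) equivalence relation Y on ℕ and computable functions f₁, f₂ (with f₁ constantly 0) such that the equivalence relation Z generated by Y ∪ {(f₁(x), f₂(x)) : x ∈ ℕ} has exactly two equivalence classes, at least one of which is not Π⁰₁; hence Z is not Π⁰₁. -/

import Mathlib

/-- `f` is `(R,S)`-equivalence preserving. -/
def EqvPres (R S : Setoid ℕ) (f : ℕ → ℕ) : Prop :=
  ∀ x y, R.r x y → S.r (f x) (f y)

/-- `α` is a morphism of the category `Eq` from `R` to `S`: a map on quotients
induced by a computable equivalence-preserving function. -/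
def IsMor (R S : Setoid ℕ) (α : Quotient R → Quotient S) : Prop :=
  ∃ f : ℕ → ℕ, Computable f ∧ EqvPres R S f ∧
    ∀ x, α (Quotient.mk R x) = Quotient.mk S (f x)

/-- The equivalence relation generated by a binary relation on ℕ. -/
def genSetoid (r : ℕ → ℕ → Prop) : Setoid ℕ :=
  ⟨Relation.EqvGen r, Relation.EqvGen.is_equivalence r⟩

/-- The relation generating the coequalizer: `Y` together with the pairs `(f₁ x, f₂ x)`. -/
def coeqRel (Y : Setoid ℕ) (f₁ f₂ : ℕ → ℕ) : ℕ → ℕ → Prop :=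
  fun u v => Y.r u v ∨ ∃ x, u = f₁ x ∧ v = f₂ x

/-- A set of naturals is Π⁰₁ if its complement is c.e. -/
def Pi01Set (A : Set ℕ) : Prop := REPred fun n => n ∉ A

/-- An equivalence relation is Π⁰₁ (a coceer) if its graph is co-c.e. -/
def CoCE (R : Setoid ℕ) : Prop := REPred fun p : ℕ × ℕ => ¬ R.r p.1 p.2

/-!
Let `K` be the halting set and `Y` the equivalence relation that is equality on `K` and collapses
the complement of `K` to one class. `Y` is Π⁰₁: `x` and `y` are `Y`-inequivalent exactly when
`x ≠ y` and one of them is eventually enumerated into `K`. Taking `f₂` to be a computable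
enumeration of `K` (which contains `0`), the pairs `(0, f₂ x)` glue all of `K` into one class, so
`Z` has exactly the two classes `K` and its complement. The class `K` is not Π⁰₁ since its
complement is not c.e., and the classes of a Π⁰₁ equivalence relation are Π⁰₁.
-/

open Nat.Partrec Nat.Partrec.Code Encodable Denumerable

theorem REPred.comp {α β : Type*} [Primcodable α] [Primcodable β] {p : β → Prop}
    (hp : REPred p) {g : α → β} (hg : Computable g) : REPred fun a => p (g a) :=
  Partrec.comp hp hg

theorem REPred.of_exists_computable₂ {α : Type*} [Primcodable α] {p : α → Prop}
    {f : α → ℕ → Bool} (hf : Computable₂ f) (h : ∀ a, p a ↔ ∃ s, f a s) : REPred p :=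
  (Partrec.rfind hf.partrec₂).dom_re.of_eq fun a => by simp [Nat.rfind_dom, h]

theorem REPred.exists_code {p : ℕ → Prop} (hp : REPred p) :
    ∃ c : Code, ∀ n, p n ↔ (eval c n).Dom := by
  obtain ⟨c, hc⟩ :=
    Nat.Partrec.Code.exists_code.1 (Partrec.nat_iff.1 (hp.map (Computable.const 0).to₂))
  exact ⟨c, fun n => by simp [hc, Part.assert]⟩

theorem REPred.exists_computable_range_eq {p : ℕ → Prop} (hp : REPred p) {a₀ : ℕ}
    (h₀ : p a₀) :
    ∃ g : ℕ → ℕ, Computable g ∧ Set.range g = {n | p n} := by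
  obtain ⟨c, hc⟩ := hp.exists_code
  refine ⟨fun m => if (evaln m.unpair.2 c m.unpair.1).isSome then m.unpair.1 else a₀, ?_, ?_⟩
  · have h1 : Primrec fun m : ℕ => m.unpair.1 := Primrec.fst.comp Primrec.unpair
    have h2 : Primrec fun m : ℕ => m.unpair.2 := Primrec.snd.comp Primrec.unpair
    have hev : Primrec fun m : ℕ => (evaln m.unpair.2 c m.unpair.1).isSome :=
      Primrec.option_isSome.comp <| primrec_evaln.comp <| (h2.pair (Primrec.const c)).pair h1
    exact (Primrec.cond hev h1 (Primrec.const a₀)).to_comp.of_eq fun m => by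
      simp [Bool.cond_eq_ite]
  · ext n
    constructor
    · rintro ⟨m, rfl⟩
      dsimp only
      split_ifs with h
      · obtain ⟨x, hx⟩ := Option.isSome_iff_exists.1 h
        exact (hc _).2 (Part.dom_iff_mem.2 ⟨x, evaln_sound hx⟩)
      · exact h₀
    · intro hn
      obtain ⟨x, hx⟩ := Part.dom_iff_mem.1 ((hc n).1 hn)
      obtain ⟨s, hs⟩ := evaln_complete.1 hx
      exact ⟨Nat.pair n s, by simp [Option.mem_def.1 hs]⟩

theorem CoCE.pi01Set_setOf_r {R : Setoid ℕ} (hR : CoCE R) (a : ℕ) : Pi01Set {x | R.r x a} :=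
  hR.comp (Computable.id.pair (Computable.const a))

def collapseCompl (A : Set ℕ) : Setoid ℕ where
  r x y := x = y ∨ (x ∉ A ∧ y ∉ A)
  iseqv := by
    refine ⟨fun x => Or.inl rfl, ?_, ?_⟩
    · rintro x y (rfl | ⟨hx, hy⟩)
      exacts [Or.inl rfl, Or.inr ⟨hy, hx⟩]
    · rintro x y z (rfl | ⟨hx, hy⟩) (rfl | ⟨hy', hz⟩)
      exacts [Or.inl rfl, Or.inr ⟨hy', hz⟩, Or.inr ⟨hx, hy⟩, Or.inr ⟨hx, hz⟩]

theorem collapseCompl_coCE {A : Set ℕ} {g : ℕ → ℕ} (hg : Computable g)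
    (hA : Set.range g = A) : CoCE (collapseCompl A) := by
  subst hA
  have hbeq : Computable₂ fun a b : ℕ => a == b := Primrec.beq.to_comp
  have hx : Computable fun q : (ℕ × ℕ) × ℕ => q.1.1 := Computable.fst.comp Computable.fst
  have hy : Computable fun q : (ℕ × ℕ) × ℕ => q.1.2 := Computable.snd.comp Computable.fst
  have hgm : Computable fun q : (ℕ × ℕ) × ℕ => g q.2 := hg.comp Computable.snd
  refine REPred.of_exists_computable₂
    (f := fun p m => !(p.1 == p.2) && (g m == p.1 || g m == p.2)) ?_ fun ⟨x, y⟩ => ?_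
  · exact Primrec.and.to_comp.comp (Primrec.not.to_comp.comp (hbeq.comp hx hy))
      (Primrec.or.to_comp.comp (hbeq.comp hgm hx) (hbeq.comp hgm hy))
  · show ¬(x = y ∨ (x ∉ Set.range g ∧ y ∉ Set.range g)) ↔ _
    simp only [Bool.and_eq_true, Bool.not_eq_true', beq_eq_false_iff_ne, Bool.or_eq_true,
      beq_iff_eq, exists_and_left, exists_or]
    tauto

theorem genSetoid_coeqRel_collapseCompl_iff {A : Set ℕ} {g : ℕ → ℕ} (hA : Set.range g = A)
    {a₀ : ℕ} (h₀ : a₀ ∈ A) (x y : ℕ) :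
    (genSetoid (coeqRel (collapseCompl A) (fun _ => a₀) g)).r x y ↔ (x ∈ A ↔ y ∈ A) := by
  subst hA
  set Z := genSetoid (coeqRel (collapseCompl (Set.range g)) (fun _ => a₀) g)
  constructor
  · intro h
    induction h with
    | rel u v huv =>
      rcases huv with (rfl | ⟨hu, hv⟩) | ⟨n, rfl, rfl⟩
      · rfl
      · simp [hu, hv]
      · simp [h₀]
    | refl => rfl
    | symm _ _ _ ih => exact ih.symm
    | trans _ _ _ _ _ ih₁ ih₂ => exact ih₁.trans ih₂
  · intro h
    by_cases hx : x ∈ Set.range g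
    · obtain ⟨m, rfl⟩ := hx
      obtain ⟨n, rfl⟩ := h.1 ⟨m, rfl⟩
      have hm : Z.r a₀ (g m) := Relation.EqvGen.rel _ _ (Or.inr ⟨m, rfl, rfl⟩)
      have hn : Z.r a₀ (g n) := Relation.EqvGen.rel _ _ (Or.inr ⟨n, rfl, rfl⟩)
      exact Z.trans (Z.symm hm) hn
    · exact Relation.EqvGen.rel _ _ (Or.inl (Or.inr ⟨hx, mt h.2 hx⟩))

def haltingSet : Set ℕ := {e | (eval (ofNat Code e) 0).Dom}

theorem haltingSet_rePred : REPred (· ∈ haltingSet) :=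
  (ComputablePred.halting_problem_re 0).comp (Computable.ofNat Code)

theorem haltingSet_compl_not_rePred : ¬REPred (· ∉ haltingSet) := fun h =>
  ComputablePred.halting_problem_not_re 0 <|
    (h.comp (Computable.encode (α := Code))).of_eq fun c => by simp [haltingSet]

theorem zero_mem_haltingSet : 0 ∈ haltingSet := by
  have : ofNat Code 0 = Code.zero := by
    rw [← ofNat_encode Code.zero]; simp [encodeCode_eq, encodeCode]
  simp only [haltingSet, Set.mem_ofPred_eq, this, eval]
  trivial

theorem exists_notMem_of_not_rePred_compl {A : Set ℕ} (hA : ¬REPred (· ∉ A)) :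
    ∃ b, b ∉ A := by
  by_contra! h
  exact hA ((Partrec.none (σ := Unit)).dom_re.of_eq fun b => by simp [h b])

/-- There are a Π⁰₁ equivalence relation `Y` and computable `f₁, f₂` with `f₁`
constantly `0` such that the equivalence relation `Z` generated by
`Y ∪ {(f₁ x, f₂ x)}` has exactly two classes, one of which is not Π⁰₁,
and hence `Z` is not Π⁰₁. -/
theorem stmt_14 :
    ∃ (Y : Setoid ℕ) (f₁ f₂ : ℕ → ℕ),
      CoCE Y ∧ Computable f₁ ∧ Computable f₂ ∧ (∀ x, f₁ x = 0) ∧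
      (∃ a b : ℕ, ¬ (genSetoid (coeqRel Y f₁ f₂)).r a b ∧
        ∀ x, (genSetoid (coeqRel Y f₁ f₂)).r x a ∨ (genSetoid (coeqRel Y f₁ f₂)).r x b) ∧
      (∃ a : ℕ, ¬ Pi01Set {x | (genSetoid (coeqRel Y f₁ f₂)).r x a}) ∧
      ¬ CoCE (genSetoid (coeqRel Y f₁ f₂)) := by
  obtain ⟨g, hg, hrange⟩ := haltingSet_rePred.exists_computable_range_eq zero_mem_haltingSet
  obtain ⟨b, hb⟩ := exists_notMem_of_not_rePred_compl haltingSet_compl_not_rePred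
  set Z := genSetoid (coeqRel (collapseCompl haltingSet) (fun _ => 0) g)
  have hZ := genSetoid_coeqRel_collapseCompl_iff hrange zero_mem_haltingSet
  have hclass : {x | Z.r x 0} = haltingSet := by
    ext x; simp [Z, hZ, zero_mem_haltingSet]
  have hclass_not_pi01 : ¬Pi01Set {x | Z.r x 0} := hclass ▸ haltingSet_compl_not_rePred
  refine ⟨collapseCompl haltingSet, fun _ => 0, g, collapseCompl_coCE hg hrange,
    Computable.const 0, hg, fun _ => rfl, ⟨0, b, ?_, fun x => ?_⟩, ⟨0, hclass_not_pi01⟩,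
    fun h => hclass_not_pi01 (h.pi01Set_setOf_r 0)⟩
  · simp [hZ, zero_mem_haltingSet, hb]
  · by_cases hx : x ∈ haltingSet <;> simp [hZ, zero_mem_haltingSet, hb, hx]
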